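/- Let v₂ = R_G² + r_E². For every r > 0 such that −1 ≤ (v₂ − r²)/(2·R_G·r_E·cos φ) ≤ 1, the one-dimensional Hausdorff measure of the portion of the geostationary orbit within distance r of the terminal equals μH¹({x ∈ C_G : ‖x − t‖ ≤ r}) = 2·R_G·arccos((v₂ − r²)/(2·R_G·r_E·cos φ)). -/

import Mathlib

/-!
By the law of cosines, the point of the geostationary circle at longitude `θ` lies within
distance `r` of the terminal iff `cos θ ≥ (v₂ - r²)/(2 R_G r_E cos φ)`, so the region is the arc
`|θ| ≤ arccos ((v₂ - r²)/(2 R_G r_E cos φ))`. An arc `θ ↦ R e^{iθ}`, `θ ∈ [a, b]`, `b - a ≤ 2π`,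
has one-dimensional Hausdorff measure `R (b - a)`: the parametrisation is `R`-Lipschitz, and it is
injective and expands distances on short pieces by a factor close to `R`, since the chord
`2R |sin (Δ/2)|` differs from `R |Δ|` only by `O(|Δ|³)`; summing over the pieces gives the
matching lower bound.
-/

open Real MeasureTheory Set

section ArcLength

variable {X : Type*} [MetricSpace X] [MeasurableSpace X] [BorelSpace X] {f : ℝ → X} {a b c : ℝ}

theorem ofReal_mul_le_hausdorffMeasure_image_Icc (hc : 0 < c)
    (hf : ∀ x ∈ Icc a b, ∀ y ∈ Icc a b, c * |x - y| ≤ dist (f x) (f y)) :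
    ENNReal.ofReal (c * (b - a)) ≤ μH[1] (f '' Icc a b) := by
  have hanti : AntilipschitzWith (Real.toNNReal c⁻¹) ((Icc a b).domRestrict f) :=
    AntilipschitzWith.of_le_mul_dist fun x y => by
      rw [Real.coe_toNNReal _ (inv_nonneg.2 hc.le), Subtype.dist_eq, Real.dist_eq,
        inv_mul_eq_div, le_div_iff₀' hc]
      exact hf x x.2 y y.2
  have h := hanti.le_hausdorffMeasure_image zero_le_one univ
  have hvol : μH[1] (univ : Set (Icc a b)) = ENNReal.ofReal (b - a) := by
    rw [← isometry_subtype_coe.hausdorffMeasure_image (Or.inl zero_le_one), image_univ,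
      Subtype.range_coe, hausdorffMeasure_real, Real.volume_Icc]
  rw [hvol, image_univ, range_domRestrict, ENNReal.rpow_one] at h
  calc ENNReal.ofReal (c * (b - a)) = ENNReal.ofReal c * ENNReal.ofReal (b - a) :=
        ENNReal.ofReal_mul hc.le
    _ ≤ ENNReal.ofReal c * (ENNReal.ofReal c⁻¹ * μH[1] (f '' Icc a b)) := by gcongr; exact h
    _ = μH[1] (f '' Icc a b) := by
        rw [← mul_assoc, ← ENNReal.ofReal_mul hc.le, mul_inv_cancel₀ hc.ne', ENNReal.ofReal_one,
          one_mul]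

theorem hausdorffMeasure_image_Icc_add_image_Icc {d m : ℝ} (hd : 0 < d)
    (hf : ContinuousOn f (Icc a b)) (hinj : InjOn f (Ico a b)) (ham : a ≤ m) (hmb : m ≤ b) :
    μH[d] (f '' Icc a m) + μH[d] (f '' Icc m b) = μH[d] (f '' Icc a b) := by
  have := Measure.nullSingletonClass_hausdorff X hd
  have hinter : f '' Icc a m ∩ f '' Icc m b ⊆ {f m, f b} := by
    rintro _ ⟨⟨x, hx, rfl⟩, y, hy, hxy⟩
    rcases hy.2.eq_or_lt with rfl | hyb
    · exact Or.inr hxy.symm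
    · have hxy' : x = y :=
        hinj ⟨hx.1, hx.2.trans_lt (hy.1.trans_lt hyb)⟩ ⟨ham.trans hy.1, hyb⟩ hxy.symm
      exact Or.inl (by rw [le_antisymm hx.2 (hxy' ▸ hy.1)])
  have hmeas : MeasurableSet (f '' Icc m b) :=
    (isCompact_Icc.image_of_continuousOn
      (hf.mono (Icc_subset_Icc ham le_rfl))).isClosed.measurableSet
  rw [← measure_union₀ hmeas.nullMeasurableSet
    (measure_mono_null hinter ((toFinite _).measure_zero _)), ← image_union,
    Icc_union_Icc_eq_Icc ham hmb]

theorem ofReal_mul_le_hausdorffMeasure_image_Icc_of_injOn {δ : ℝ} (hc : 0 < c) (hδ : 0 < δ)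
    (hf : ContinuousOn f (Icc a b)) (hinj : InjOn f (Ico a b))
    (hloc : ∀ x ∈ Icc a b, ∀ y ∈ Icc a b, |x - y| ≤ δ → c * |x - y| ≤ dist (f x) (f y)) :
    ENNReal.ofReal (c * (b - a)) ≤ μH[1] (f '' Icc a b) := by
  suffices key : ∀ n : ℕ, ∀ b' ∈ Icc a b, b' - a ≤ n * δ →
      ENNReal.ofReal (c * (b' - a)) ≤ μH[1] (f '' Icc a b') by
    rcases le_or_gt a b with hab | hba
    · obtain ⟨n, hn⟩ := exists_nat_ge ((b - a) / δ)
      exact key n b ⟨hab, le_rfl⟩ (by rwa [div_le_iff₀ hδ] at hn)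
    · rw [ENNReal.ofReal_eq_zero.2 (by nlinarith)]
      exact zero_le
  intro n
  induction n with
  | zero =>
    intro b' hb' hle
    rw [ENNReal.ofReal_eq_zero.2 (by push_cast at hle; nlinarith)]
    exact zero_le
  | succ n ih =>
    intro b' hb' hle
    set m := max a (b' - δ)
    have ham : a ≤ m := le_max_left _ _
    have hmb : m ≤ b' := max_le hb'.1 (by linarith)
    have hm : m - a ≤ n * δ := by
      push_cast at hle
      linarith [max_le (le_add_of_nonneg_right (by positivity))
        (show b' - δ ≤ a + n * δ by linarith)]
    rw [← hausdorffMeasure_image_Icc_add_image_Icc one_pos (hf.mono (Icc_subset_Icc_right hb'.2))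
      (hinj.mono (Ico_subset_Ico_right hb'.2)) ham hmb,
      show c * (b' - a) = c * (m - a) + c * (b' - m) by ring,
      ENNReal.ofReal_add (by nlinarith) (by nlinarith)]
    refine add_le_add (ih m ⟨ham, hmb.trans hb'.2⟩ hm)
      (ofReal_mul_le_hausdorffMeasure_image_Icc hc fun x hx y hy => ?_)
    refine hloc x ⟨ham.trans hx.1, hx.2.trans hb'.2⟩ y ⟨ham.trans hy.1, hy.2.trans hb'.2⟩ ?_
    rw [abs_sub_le_iff]
    constructor <;> linarith [hx.1, hx.2, hy.1, hy.2, le_max_right a (b' - δ)]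

end ArcLength

section CircleMap

open Complex

theorem dist_circleMap_circleMap (c : ℂ) (R x y : ℝ) :
    dist (circleMap c R x) (circleMap c R y) = |R| * |2 * Real.sin ((x - y) / 2)| := by
  have h : circleMap c R x - circleMap c R y = circleMap 0 R y * (exp (I * ↑(x - y)) - 1) := by
    simp only [circleMap, zero_add, mul_sub, mul_assoc, ← Complex.exp_add]
    push_cast
    ring_nf
  rw [dist_eq_norm, h, norm_mul, norm_circleMap_zero, norm_exp_I_mul_ofReal_sub_one,
    Real.norm_eq_abs]

theorem mul_abs_sub_le_dist_circleMap (c : ℂ) (R : ℝ) {x y δ : ℝ} (h : |x - y| ≤ δ) :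
    |R| * (1 - δ ^ 2 / 24) * |x - y| ≤ dist (circleMap c R x) (circleMap c R y) := by
  rw [dist_circleMap_circleMap, mul_assoc]
  gcongr
  have hsin : |x - y| / 2 - (|x - y| / 2) ^ 3 / 6 ≤ |Real.sin ((x - y) / 2)| := by
    refine (sin_ge_sub_cube (by positivity)).trans ?_
    rw [show |x - y| / 2 = |(x - y) / 2| by rw [abs_div, abs_two]]
    rcases abs_cases ((x - y) / 2) with ⟨habs, _⟩ | ⟨habs, _⟩ <;> rw [habs]
    · exact le_abs_self _
    · rw [Real.sin_neg]; exact neg_le_abs _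
  rw [abs_mul, abs_two]
  have hδ : 0 ≤ δ := (abs_nonneg _).trans h
  nlinarith [mul_nonneg (mul_nonneg (sub_nonneg.2 h) (add_nonneg hδ (abs_nonneg (x - y))))
    (abs_nonneg (x - y))]

theorem hausdorffMeasure_circleMap_image_Icc (c : ℂ) (R : ℝ) {a b : ℝ} (hab : a ≤ b)
    (h2π : b - a ≤ 2 * π) :
    μH[1] (circleMap c R '' Icc a b) = ENNReal.ofReal (|R| * (b - a)) := by
  refine le_antisymm ?_ ?_
  · have h := (lipschitzWith_circleMap c R).hausdorffMeasure_image_le zero_le_one (Icc a b)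
    rw [hausdorffMeasure_real, Real.volume_Icc, ENNReal.rpow_one, ← Real.toNNReal_abs] at h
    rwa [ENNReal.ofReal_mul (abs_nonneg R)]
  rcases eq_or_ne R 0 with rfl | hR
  · simp
  refine ENNReal.le_of_forall_lt_one_mul_le fun κ hκ => ?_
  have hκ' : κ.toReal < 1 := ENNReal.toReal_lt_of_lt_ofReal (by simpa using hκ)
  set δ := 1 - κ.toReal
  have hδ : 0 < δ := by linarith
  have hδ1 : δ ≤ 1 := by linarith [ENNReal.toReal_nonneg (a := κ)]
  have hcoef : 0 < |R| * (1 - δ ^ 2 / 24) := mul_pos (abs_pos.2 hR) (by nlinarith)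
  calc κ * ENNReal.ofReal (|R| * (b - a))
      = ENNReal.ofReal (κ.toReal * (|R| * (b - a))) := by
        rw [ENNReal.ofReal_mul ENNReal.toReal_nonneg, ENNReal.ofReal_toReal hκ.ne_top]
    _ ≤ ENNReal.ofReal (|R| * (1 - δ ^ 2 / 24) * (b - a)) := by
        have hκδ : κ.toReal ≤ 1 - δ ^ 2 / 24 := by nlinarith
        refine ENNReal.ofReal_le_ofReal ?_
        nlinarith [mul_nonneg (abs_nonneg R) (sub_nonneg.2 hab)]
    _ ≤ μH[1] (circleMap c R '' Icc a b) :=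
        ofReal_mul_le_hausdorffMeasure_image_Icc_of_injOn hcoef hδ
          (continuous_circleMap c R).continuousOn (injOn_circleMap_of_abs_sub_le' hR h2π)
          fun x _ y _ hxy => mul_abs_sub_le_dist_circleMap c R hxy

end CircleMap

def toEquatorialPlane (z : ℂ) : EuclideanSpace ℝ (Fin 3) := !₂[z.re, z.im, 0]

theorem isometry_toEquatorialPlane : Isometry toEquatorialPlane :=
  Isometry.of_dist_eq fun z w => by
    simp [toEquatorialPlane, EuclideanSpace.dist_eq, Fin.sum_univ_three, Complex.dist_eq_re_im,
      Real.dist_eq, sq_abs]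

theorem norm_toEquatorialPlane (z : ℂ) : ‖toEquatorialPlane z‖ = ‖z‖ := by
  simp [toEquatorialPlane, EuclideanSpace.norm_eq, Fin.sum_univ_three,
    Complex.norm_eq_sqrt_sq_add_sq]

theorem setOf_norm_eq_and_eq_zero_eq_image_sphere (R : ℝ) :
    {x : EuclideanSpace ℝ (Fin 3) | ‖x‖ = R ∧ x 2 = 0} =
      toEquatorialPlane '' Metric.sphere 0 R := by
  ext x
  constructor
  · rintro ⟨hxR, hx2⟩
    have hx : toEquatorialPlane ⟨x 0, x 1⟩ = x := by
      ext i
      fin_cases i <;> simp [toEquatorialPlane, hx2]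
    refine ⟨⟨x 0, x 1⟩, ?_, hx⟩
    rw [mem_sphere_zero_iff_norm, ← norm_toEquatorialPlane, hx, hxR]
  · rintro ⟨z, hz, rfl⟩
    exact ⟨(norm_toEquatorialPlane z).trans (mem_sphere_zero_iff_norm.1 hz),
      by simp [toEquatorialPlane]⟩

theorem norm_toEquatorialPlane_circleMap_sub_sq (R θ ρ φ : ℝ) :
    ‖toEquatorialPlane (circleMap 0 R θ) - !₂[ρ * cos φ, 0, ρ * sin φ]‖ ^ 2 =
      R ^ 2 + ρ ^ 2 - 2 * R * ρ * cos φ * cos θ := by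
  simp only [toEquatorialPlane, circleMap_zero_re, circleMap_zero_im, EuclideanSpace.norm_sq_eq,
    PiLp.sub_apply, norm_eq_abs, sq_abs, Fin.sum_univ_three, Fin.isValue, Matrix.cons_val_zero,
    Matrix.cons_val_one, sub_zero, Matrix.cons_val, zero_sub, even_two, Even.neg_pow]
  linear_combination R ^ 2 * sin_sq_add_cos_sq θ + ρ ^ 2 * sin_sq_add_cos_sq φ

theorem norm_toEquatorialPlane_circleMap_sub_le_iff {R θ ρ φ r : ℝ}
    (hD : 0 < 2 * R * ρ * cos φ) (hr : 0 ≤ r) :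
    ‖toEquatorialPlane (circleMap 0 R θ) - !₂[ρ * cos φ, 0, ρ * sin φ]‖ ≤ r ↔
      (R ^ 2 + ρ ^ 2 - r ^ 2) / (2 * R * ρ * cos φ) ≤ cos θ := by
  rw [div_le_iff₀ hD, ← sq_le_sq₀ (norm_nonneg _) hr, norm_toEquatorialPlane_circleMap_sub_sq]
  constructor <;> intro h <;> linarith

theorem le_cos_iff_abs_le_arccos {c θ : ℝ} (hc₁ : -1 ≤ c) (hc₂ : c ≤ 1) (hθ : |θ| ≤ π) :
    c ≤ cos θ ↔ |θ| ≤ arccos c := by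
  rw [← strictAntiOn_cos.le_iff_ge ⟨arccos_nonneg c, arccos_le_pi c⟩ ⟨abs_nonneg θ, hθ⟩,
    cos_arccos hc₁ hc₂, cos_abs]

theorem setOf_norm_sub_le_eq_image_circleMap_Icc {R ρ φ r : ℝ} (hR : 0 ≤ R)
    (hD : 0 < 2 * R * ρ * cos φ) (hr : 0 ≤ r)
    (hc₁ : -1 ≤ (R ^ 2 + ρ ^ 2 - r ^ 2) / (2 * R * ρ * cos φ))
    (hc₂ : (R ^ 2 + ρ ^ 2 - r ^ 2) / (2 * R * ρ * cos φ) ≤ 1) :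
    {x ∈ {x : EuclideanSpace ℝ (Fin 3) | ‖x‖ = R ∧ x 2 = 0} |
        ‖x - !₂[ρ * cos φ, 0, ρ * sin φ]‖ ≤ r} =
      toEquatorialPlane '' (circleMap 0 R ''
        Icc (-arccos ((R ^ 2 + ρ ^ 2 - r ^ 2) / (2 * R * ρ * cos φ)))
          (arccos ((R ^ 2 + ρ ^ 2 - r ^ 2) / (2 * R * ρ * cos φ)))) := by
  ext x
  rw [setOf_norm_eq_and_eq_zero_eq_image_sphere]
  constructor
  · rintro ⟨⟨z, hz, rfl⟩, hzr⟩
    have hzθ : circleMap 0 R (Complex.arg z) = z := by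
      rw [circleMap_zero, ← mem_sphere_zero_iff_norm.1 hz, Complex.norm_mul_exp_arg_mul_I]
    rw [← hzθ, norm_toEquatorialPlane_circleMap_sub_le_iff hD hr,
      le_cos_iff_abs_le_arccos hc₁ hc₂ (Complex.abs_arg_le_pi z)] at hzr
    exact ⟨z, ⟨Complex.arg z, abs_le.1 hzr, hzθ⟩, rfl⟩
  · rintro ⟨_, ⟨θ, hθ, rfl⟩, rfl⟩
    have hθ' := abs_le.2 hθ
    refine ⟨mem_image_of_mem _ (circleMap_mem_sphere 0 hR θ), ?_⟩
    rw [norm_toEquatorialPlane_circleMap_sub_le_iff hD hr,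
      le_cos_iff_abs_le_arccos hc₁ hc₂ (hθ'.trans (arccos_le_pi _))]
    exact hθ'

/-- With `v₂ = R_G² + r_E²`, for every `r > 0` such that
`−1 ≤ (v₂ − r²)/(2·R_G·r_E·cos φ) ≤ 1`, the one-dimensional Hausdorff measure of the
portion of the geostationary orbit within distance `r` of the terminal equals
`2·R_G·arccos((v₂ − r²)/(2·R_G·r_E·cos φ))`. -/
theorem hausdorff_measure_geo_within_distance
    (r_E a_G φ : ℝ) (hr : 0 < r_E) (ha : 0 < a_G)
    (hφ : φ ∈ Set.Ioo (-(π / 2)) (π / 2))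
    (R_G : ℝ) (hR : R_G = r_E + a_G)
    (C_G : Set (EuclideanSpace ℝ (Fin 3)))
    (hC : C_G = {x : EuclideanSpace ℝ (Fin 3) | ‖x‖ = R_G ∧ x 2 = 0})
    (t : EuclideanSpace ℝ (Fin 3))
    (ht : t = ![r_E * Real.cos φ, 0, r_E * Real.sin φ])
    (v₂ : ℝ) (hv₂ : v₂ = R_G ^ 2 + r_E ^ 2) :
    ∀ r : ℝ, 0 < r →
      -1 ≤ (v₂ - r ^ 2) / (2 * R_G * r_E * Real.cos φ) →
      (v₂ - r ^ 2) / (2 * R_G * r_E * Real.cos φ) ≤ 1 →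
      μH[1] {x ∈ C_G | ‖x - t‖ ≤ r} =
        ENNReal.ofReal
          (2 * R_G * Real.arccos ((v₂ - r ^ 2) / (2 * R_G * r_E * Real.cos φ))) := by
  intro r hr0 hc₁ hc₂
  subst hC hv₂
  obtain rfl : t = !₂[r_E * cos φ, 0, r_E * sin φ] := WithLp.ofLp_injective 2 ht
  have hRG : 0 < R_G := by linarith
  have hD : 0 < 2 * R_G * r_E * cos φ := by
    have := cos_pos_of_mem_Ioo hφ
    positivity
  set α := arccos ((R_G ^ 2 + r_E ^ 2 - r ^ 2) / (2 * R_G * r_E * cos φ))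
  have hαπ : α ≤ π := arccos_le_pi _
  rw [setOf_norm_sub_le_eq_image_circleMap_Icc hRG.le hD hr0.le hc₁ hc₂,
    isometry_toEquatorialPlane.hausdorffMeasure_image (Or.inl zero_le_one),
    hausdorffMeasure_circleMap_image_Icc _ _ (neg_le_self (arccos_nonneg _)) (by linarith),
    abs_of_pos hRG]
  congr 1
  ring
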